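/- arXiv:1204.4967 — 5 statements merged into one kernel-verified Lean document; each statement's English description precedes it below -/
import Mathlib

section
/- Let K be a field, d ≥ 2 an integer, and F, G ∈ K[X,Y] binary forms of degree d. For every λ ∈ K^× and every A ∈ GL₂(K), one has Res_d(λF_A, λG_A) = λ^{2d} · det(A)^{d²+d} · Res_d(F,G). -/
noncomputable section

/-- Determinant of the Sylvester matrix of two polynomials, given by coefficient
sequences `p` (regarded as having degree `m`) and `q` (regarded as having degree `n`). -/
def sylRes {K : Type*} [CommRing K] (m n : ℕ) (p q : ℕ → K) : K :=
  Matrix.det (Matrix.of fun i j : Fin (n + m) =>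
    if (i : ℕ) < n then
      (if (i : ℕ) ≤ (j : ℕ) ∧ (j : ℕ) ≤ (i : ℕ) + m then p (m - ((j : ℕ) - (i : ℕ))) else 0)
    else
      (if (i : ℕ) - n ≤ (j : ℕ) ∧ (j : ℕ) ≤ ((i : ℕ) - n) + n then
        q (n - ((j : ℕ) - ((i : ℕ) - n))) else 0))

/-- The binary form of degree `d` with coefficient sequence `f`
(`f i` is the coefficient of `X^i Y^(d-i)`). -/
def toForm {K : Type*} [CommRing K] (d : ℕ) (f : ℕ → K) : MvPolynomial (Fin 2) K :=
  ∑ i ∈ Finset.range (d + 1),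
    MvPolynomial.C (f i) * MvPolynomial.X 0 ^ i * MvPolynomial.X 1 ^ (d - i)

/-- Substitution `X ↦ A₀₀ X + A₀₁ Y`, `Y ↦ A₁₀ X + A₁₁ Y`. -/
def substMat {K : Type*} [CommRing K] (A : Matrix (Fin 2) (Fin 2) K)
    (P : MvPolynomial (Fin 2) K) : MvPolynomial (Fin 2) K :=
  MvPolynomial.eval₂ MvPolynomial.C
    (fun k => MvPolynomial.C (A k 0) * MvPolynomial.X 0 + MvPolynomial.C (A k 1) * MvPolynomial.X 1) P

/-- Coefficient sequence of a binary form of degree `d`. -/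
def coeffVec {K : Type*} [CommRing K] (d : ℕ) (P : MvPolynomial (Fin 2) K) : ℕ → K :=
  fun i => MvPolynomial.coeff (Finsupp.single (0 : Fin 2) i + Finsupp.single (1 : Fin 2) (d - i)) P

/-- Coefficients of `F_A = δ·(F∘A) − β·(G∘A)` for `A = [[α,β],[γ,δ]]`. -/
def FA {K : Type*} [CommRing K] (d : ℕ) (f g : ℕ → K) (A : Matrix (Fin 2) (Fin 2) K) : ℕ → K :=
  coeffVec d (MvPolynomial.C (A 1 1) * substMat A (toForm d f) -
    MvPolynomial.C (A 0 1) * substMat A (toForm d g))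

/-- Coefficients of `G_A = −γ·(F∘A) + α·(G∘A)` for `A = [[α,β],[γ,δ]]`. -/
def GA {K : Type*} [CommRing K] (d : ℕ) (f g : ℕ → K) (A : Matrix (Fin 2) (Fin 2) K) : ℕ → K :=
  coeffVec d (-(MvPolynomial.C (A 1 0)) * substMat A (toForm d f) +
    MvPolynomial.C (A 0 0) * substMat A (toForm d g))

/-- The ideal `Res_R([φ])`: generated by the resultants of all models over `R`
of the form `[F,G]^{(λ,A)}` with `(λ,A) ∈ K^× × GL₂(K)`. -/
def ResIdeal (R : Type*) {K : Type*} [CommRing R] [Field K] [Algebra R K]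
    (d : ℕ) (f g : ℕ → K) : Ideal R :=
  Ideal.span { r : R | ∃ (l : K) (A : Matrix (Fin 2) (Fin 2) K), l ≠ 0 ∧ A.det ≠ 0 ∧
    (∀ i, ∃ a : R, algebraMap R K a = l * FA d f g A i) ∧
    (∀ i, ∃ b : R, algebraMap R K b = l * GA d f g A i) ∧
    algebraMap R K r = sylRes d d (fun i => l * FA d f g A i) (fun i => l * GA d f g A i) }

/-- The ideal `Res_R([φ]₁)`: as `ResIdeal` but with `A` restricted to affine
(upper-triangular) transformations. -/
def AffResIdeal (R : Type*) {K : Type*} [CommRing R] [Field K] [Algebra R K]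
    (d : ℕ) (f g : ℕ → K) : Ideal R :=
  Ideal.span { r : R | ∃ (l : K) (A : Matrix (Fin 2) (Fin 2) K), l ≠ 0 ∧ A.det ≠ 0 ∧ A 1 0 = 0 ∧
    (∀ i, ∃ a : R, algebraMap R K a = l * FA d f g A i) ∧
    (∀ i, ∃ b : R, algebraMap R K b = l * GA d f g A i) ∧
    algebraMap R K r = sylRes d d (fun i => l * FA d f g A i) (fun i => l * GA d f g A i) }

/-!
Substituting `A` into binary forms of degree `n` acts on their coefficient
vectors by a matrix `M_n(A)` which is multiplicative in `A`, hence has determinant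
`det A ^ (n + 1).choose 2`: this is checked on diagonal matrices and transvections, where
`M_n(A)` is triangular (or conjugate to a triangular matrix by the swap of the variables).
The Sylvester matrix `S(P, Q)` of two forms of degree `d` has as rows the coefficient vectors,
in degree `2d - 1`, of the products `P · X^(d-1-i) Y^i` and `Q · X^(d-1-i) Y^i`. Substituting
`A` into these rows and expanding `(X^(d-1-i) Y^i)∘A` in the monomial basis gives
`S(P, Q) · M_(2d-1)(A) = (1 ⊗ M_(d-1)(A)) · S(P∘A, Q∘A)`, so that
`Res(P∘A, Q∘A) = det A ^ ((2d).choose 2 - 2 d.choose 2) · Res(P, Q) = det A ^ d² · Res(P, Q)`.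
Finally `(λF_A, λG_A)` is obtained from `(F∘A, G∘A)` by the constant matrix `λ · adj A`, which
multiplies the Sylvester matrix on the left by `λ · adj A ⊗ 1`, of determinant `(λ² det A) ^ d`.
-/

open MvPolynomial Matrix
open scoped Kronecker

lemma Matrix.submatrix_id_mul {α ι κ μ ν : Type*} [Fintype κ] [Mul α] [AddCommMonoid α]
    (M : Matrix ι κ α) (N : Matrix κ μ α) (e : ν → μ) :
    (M * N).submatrix id e = M * N.submatrix id e := by
  rw [submatrix_mul _ _ _ id _ Function.bijective_id, submatrix_id_id]

lemma Nat.choose_two_two_mul_add_two (k : ℕ) :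
    (2 * k + 1 + 1).choose 2 = (k + 1).choose 2 * 2 + (k + 1) ^ 2 := by
  have h1 := Nat.add_one_mul_choose_eq (2 * k + 1) 1
  have h2 := Nat.add_one_mul_choose_eq k 1
  simp only [Nat.choose_one_right] at h1 h2
  nlinarith

namespace BinaryForm

variable {K : Type*} [CommRing K]

/-- Coefficients are indexed here by the exponent of `Y`, as the columns of `sylRes` are,
whereas `coeffVec` indexes them by the exponent of `X`. -/
def monoExp (n j : ℕ) : Fin 2 →₀ ℕ := Finsupp.single 0 (n - j) + Finsupp.single 1 j

abbrev mono (n j : ℕ) : MvPolynomial (Fin 2) K := monomial (monoExp n j) 1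

@[simp] lemma monoExp_apply_zero (n j : ℕ) : monoExp n j 0 = n - j := by simp [monoExp]

@[simp] lemma monoExp_apply_one (n j : ℕ) : monoExp n j 1 = j := by simp [monoExp]

lemma monoExp_injective (n : ℕ) : Function.Injective (monoExp n) := fun j k h => by
  simpa using DFunLike.congr_fun h 1

lemma degree_fin_two (μ : Fin 2 →₀ ℕ) : μ.degree = μ 0 + μ 1 := by
  rw [Finsupp.degree_eq_sum, Fin.sum_univ_two]

lemma eq_monoExp_iff {n j : ℕ} (hj : j ≤ n) {μ : Fin 2 →₀ ℕ} :
    μ = monoExp n j ↔ μ.degree = n ∧ μ 1 = j := by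
  constructor
  · rintro rfl
    simp only [degree_fin_two, monoExp_apply_zero, monoExp_apply_one, and_true]
    omega
  · rintro ⟨hμ, rfl⟩
    rw [degree_fin_two] at hμ
    rw [Finsupp.ext_iff, Fin.forall_fin_two, monoExp_apply_zero, monoExp_apply_one]
    omega

lemma isHomogeneous_mono {n j : ℕ} (hj : j ≤ n) :
    (mono n j : MvPolynomial (Fin 2) K).IsHomogeneous n :=
  isHomogeneous_monomial _ ((eq_monoExp_iff hj).1 rfl).1

lemma mono_eq (n j : ℕ) : (mono n j : MvPolynomial (Fin 2) K) = X 0 ^ (n - j) * X 1 ^ j := by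
  rw [X_pow_eq_monomial, X_pow_eq_monomial, monomial_mul, one_mul]; rfl

lemma _root_.MvPolynomial.IsHomogeneous.eq_sum_mono {n : ℕ} {P : MvPolynomial (Fin 2) K}
    (hP : P.IsHomogeneous n) : P = ∑ j : Fin (n + 1), coeff (monoExp n j) P • mono n j := by
  ext μ
  simp only [coeff_sum, coeff_smul, coeff_monomial, smul_eq_mul, mul_ite, mul_one, mul_zero]
  by_cases hμ : μ.degree = n
  · have hμ1 : μ 1 < n + 1 := by rw [degree_fin_two] at hμ; omega
    have hμeq : μ = monoExp n (μ 1) := (eq_monoExp_iff (by omega)).2 ⟨hμ, rfl⟩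
    rw [Finset.sum_eq_single ⟨μ 1, hμ1⟩, if_pos hμeq.symm, ← hμeq]
    · rintro j - hj
      exact if_neg fun h => hj (Fin.ext (by simp [← h]))
    · simp
  · rw [hP.coeff_eq_zero hμ]
    refine (Finset.sum_eq_zero fun j _ => if_neg fun h => hμ ?_).symm
    exact ((eq_monoExp_iff (Nat.lt_succ_iff.1 j.2)).1 h.symm).1

def substAlgHom (A : Matrix (Fin 2) (Fin 2) K) :
    MvPolynomial (Fin 2) K →ₐ[K] MvPolynomial (Fin 2) K :=
  aeval fun k => C (A k 0) * X 0 + C (A k 1) * X 1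

lemma substMat_eq_substAlgHom (A : Matrix (Fin 2) (Fin 2) K) : substMat A = substAlgHom A := rfl

lemma _root_.MvPolynomial.IsHomogeneous.substMat {n : ℕ} {P : MvPolynomial (Fin 2) K}
    (hP : P.IsHomogeneous n) (A : Matrix (Fin 2) (Fin 2) K) : (substMat A P).IsHomogeneous n := by
  rw [substMat_eq_substAlgHom, ← one_mul n]
  exact hP.aeval _ fun k =>
    ((isHomogeneous_X K 0).C_mul (A k 0)).add ((isHomogeneous_X K 1).C_mul (A k 1))

lemma substMat_substMat (A B : Matrix (Fin 2) (Fin 2) K) (P : MvPolynomial (Fin 2) K) :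
    substMat B (substMat A P) = substMat (A * B) P := by
  have h : (substAlgHom B).comp (substAlgHom A) = substAlgHom (A * B) := by
    refine algHom_ext fun k => ?_
    simp only [substAlgHom, AlgHom.comp_apply, aeval_X, map_add, map_mul, aeval_C, algebraMap_eq,
      mul_apply, Fin.sum_univ_two]
    ring
  simp only [substMat_eq_substAlgHom, ← h, AlgHom.comp_apply]

lemma substMat_one (P : MvPolynomial (Fin 2) K) : substMat 1 P = P := by
  have h : substAlgHom (1 : Matrix (Fin 2) (Fin 2) K) = AlgHom.id K _ := by
    refine algHom_ext fun k => ?_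
    fin_cases k <;> simp [substAlgHom]
  rw [substMat_eq_substAlgHom, h, AlgHom.id_apply]

def coeffMatrix {ι : Type*} (n : ℕ) (S : ι → MvPolynomial (Fin 2) K) : Matrix ι (Fin (n + 1)) K :=
  of fun i j => coeff (monoExp n j) (S i)

def substMatrix (n : ℕ) (A : Matrix (Fin 2) (Fin 2) K) : Matrix (Fin (n + 1)) (Fin (n + 1)) K :=
  coeffMatrix n fun m => substMat A (mono n m)

lemma coeffMatrix_sum_smul {ι κ : Type*} [Fintype κ] (n : ℕ) (c : Matrix ι κ K)
    (T : κ → MvPolynomial (Fin 2) K) :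
    coeffMatrix n (fun i => ∑ k, c i k • T k) = c * coeffMatrix n T := by
  ext i j
  simp [coeffMatrix, mul_apply, coeff_sum]

lemma coeffMatrix_sum_smul_mul_sum_smul {ι κ : Type*} [Fintype ι] [Fintype κ] (n : ℕ)
    (B : Matrix ι ι K) (D : Matrix κ κ K) (u : ι → MvPolynomial (Fin 2) K)
    (v : κ → MvPolynomial (Fin 2) K) :
    coeffMatrix n (fun x : ι × κ => (∑ i, B x.1 i • u i) * ∑ j, D x.2 j • v j) =
      (B ⊗ₖ D) * coeffMatrix n (fun y : ι × κ => u y.1 * v y.2) := by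
  rw [← coeffMatrix_sum_smul]
  congr 1
  funext x
  simp only [Finset.sum_mul_sum, Fintype.sum_prod_type, kroneckerMap_apply, smul_mul_smul_comm]

lemma coeffMatrix_mono (n : ℕ) :
    coeffMatrix n (fun j : Fin (n + 1) => (mono n j : MvPolynomial (Fin 2) K)) = 1 := by
  ext i j
  simp [coeffMatrix, coeff_monomial, one_apply, (monoExp_injective n).eq_iff, Fin.val_inj]

lemma coeffMatrix_substMat {ι : Type*} {n : ℕ} {S : ι → MvPolynomial (Fin 2) K}
    (hS : ∀ i, (S i).IsHomogeneous n) (A : Matrix (Fin 2) (Fin 2) K) :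
    coeffMatrix n (fun i => substMat A (S i)) = coeffMatrix n S * substMatrix n A := by
  have h (i) : substMat A (S i) = ∑ j, coeffMatrix n S i j • substMat A (mono n j) := by
    conv_lhs => rw [(hS i).eq_sum_mono]
    simp [substMat_eq_substAlgHom, coeffMatrix]
  simp_rw [h]
  exact coeffMatrix_sum_smul n _ _

lemma substMatrix_mul (n : ℕ) (A B : Matrix (Fin 2) (Fin 2) K) :
    substMatrix n (A * B) = substMatrix n A * substMatrix n B := by
  simp only [substMatrix, ← substMat_substMat]
  exact coeffMatrix_substMat (fun m => (isHomogeneous_mono (Nat.lt_succ_iff.1 m.2)).substMat A) B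

lemma substMatrix_one (n : ℕ) : substMatrix n (1 : Matrix (Fin 2) (Fin 2) K) = 1 := by
  simp only [substMatrix, substMat_one, coeffMatrix_mono]

lemma coeff_single_zero_linear_pow (a b : K) (N : ℕ) :
    coeff (Finsupp.single 0 N) ((C a * X 0 + C b * X 1 : MvPolynomial (Fin 2) K) ^ N) = a ^ N := by
  have hdiff : (C a * X 0 + C b * X 1 : MvPolynomial (Fin 2) K) - C a * X 0 = C b * X 1 :=
    add_sub_cancel_left _ _
  -- modulo `X 1`, the power is `(C a * X 0) ^ N`
  obtain ⟨R, hR⟩ : X 1 ∣ (C a * X 0 + C b * X 1 : MvPolynomial (Fin 2) K) ^ N - (C a * X 0) ^ N :=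
    (dvd_mul_left _ _).trans (hdiff ▸ sub_dvd_pow_sub_pow _ _ N)
  rw [← sub_add_cancel ((C a * X 0 + C b * X 1) ^ N) ((C a * X 0) ^ N), hR, coeff_add,
    coeff_X_mul', if_neg (by simp), mul_pow, ← C_pow, C_mul_X_pow_eq_monomial, coeff_monomial,
    if_pos rfl, zero_add]

lemma substMat_mono_of_upper {A : Matrix (Fin 2) (Fin 2) K} (hA : A 1 0 = 0) (n m : ℕ) :
    substMat A (mono n m) =
      (C (A 0 0) * X 0 + C (A 0 1) * X 1) ^ (n - m) *
        monomial (Finsupp.single 1 m) (A 1 1 ^ m) := by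
  rw [mono_eq, substMat_eq_substAlgHom, map_mul, map_pow, map_pow]
  simp only [substAlgHom, aeval_X, hA, C_0, zero_mul, zero_add]
  rw [mul_pow, ← C_pow, C_mul_X_pow_eq_monomial]

lemma substMatrix_blockTriangular_of_upper {A : Matrix (Fin 2) (Fin 2) K} (hA : A 1 0 = 0)
    (n : ℕ) : (substMatrix n A).BlockTriangular id := by
  intro m j hjm
  simp only [substMatrix, coeffMatrix, of_apply, substMat_mono_of_upper hA n, coeff_mul_monomial']
  exact if_neg fun h => absurd (by simpa using h 1) (not_le.2 hjm)

lemma substMatrix_apply_self_of_upper {A : Matrix (Fin 2) (Fin 2) K} (hA : A 1 0 = 0) {n : ℕ}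
    (m : Fin (n + 1)) : substMatrix n A m m = A 0 0 ^ (n - m) * A 1 1 ^ (m : ℕ) := by
  have hsub : monoExp n m - Finsupp.single (1 : Fin 2) (m : ℕ) = Finsupp.single 0 (n - m) := by
    ext i; fin_cases i <;> simp [monoExp]
  have hle : Finsupp.single (1 : Fin 2) (m : ℕ) ≤ monoExp n m := by
    rw [Finsupp.le_def]; intro i; fin_cases i <;> simp
  simp only [substMatrix, coeffMatrix, of_apply, substMat_mono_of_upper hA n, coeff_mul_monomial',
    if_pos hle, hsub, coeff_single_zero_linear_pow]

lemma det_substMatrix_of_upper {A : Matrix (Fin 2) (Fin 2) K} (hA : A 1 0 = 0) (n : ℕ) :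
    (substMatrix n A).det = A.det ^ (n + 1).choose 2 := by
  rw [det_of_isUpperTriangular (substMatrix_blockTriangular_of_upper hA n)]
  have hsum : ∑ m : Fin (n + 1), (m : ℕ) = (n + 1).choose 2 := by
    rw [Fin.sum_univ_eq_sum_range (fun i => i), Finset.sum_range_id, Nat.choose_two_right]
  have hsum_rev : ∑ m : Fin (n + 1), (n - m) = (n + 1).choose 2 := by
    rw [Fin.sum_univ_eq_sum_range (n - ·), ← hsum, Fin.sum_univ_eq_sum_range (fun i => i),
      ← Finset.sum_range_reflect]
    exact Finset.sum_congr rfl fun i hi => by have := Finset.mem_range.1 hi; omega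
  simp only [substMatrix_apply_self_of_upper hA, Finset.prod_mul_distrib,
    Finset.prod_pow_eq_pow_sum, hsum, hsum_rev, det_fin_two, hA, mul_zero, sub_zero, mul_pow]

lemma det_substMatrix_transvection (n : ℕ) {i j : Fin 2} (hij : i ≠ j) (c : K) :
    (substMatrix n (transvection i j c)).det = 1 := by
  have h01 : transvection 0 1 c = !![1, c; 0, 1] := by
    ext a b; fin_cases a <;> fin_cases b <;> simp [transvection, one_apply]
  have h10 : transvection 1 0 c = !![1, 0; c, 1] := by
    ext a b; fin_cases a <;> fin_cases b <;> simp [transvection, one_apply]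
  have upper : (substMatrix n !![1, c; 0, 1]).det = 1 := by
    rw [det_substMatrix_of_upper (by simp) n, det_fin_two_of]
    simp
  have swap_sq : (substMatrix n !![0, 1; 1, 0]).det ^ 2 = (1 : K) := by
    have hS : !![0, 1; 1, 0] * !![0, 1; 1, 0] = (1 : Matrix (Fin 2) (Fin 2) K) := by
      simp [one_fin_two]
    rw [sq, ← det_mul, ← substMatrix_mul, hS, substMatrix_one, det_one]
  have hconj : !![1, 0; c, 1] = !![0, 1; 1, 0] * !![1, c; 0, 1] * !![0, 1; (1 : K), 0] := by
    simp
  fin_cases i <;> fin_cases j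
  · exact (hij rfl).elim
  · exact h01 ▸ upper
  · change (substMatrix n (transvection 1 0 c)).det = 1
    rw [h10, hconj, substMatrix_mul, substMatrix_mul, det_mul, det_mul, upper, mul_one, ← sq,
      swap_sq]
  · exact (hij rfl).elim

lemma det_substMatrix {F : Type*} [Field F] (n : ℕ) (A : Matrix (Fin 2) (Fin 2) F) :
    (substMatrix n A).det = A.det ^ (n + 1).choose 2 := by
  refine diagonal_transvection_induction (fun A => (substMatrix n A).det = A.det ^ (n + 1).choose 2)
    A (fun D _ => det_substMatrix_of_upper (by simp) n) (fun t => ?_) fun A B hA hB => ?_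
  · simp only [TransvectionStruct.toMatrix, det_substMatrix_transvection n t.hij,
      det_transvection_of_ne _ _ t.hij, one_pow]
  · rw [substMatrix_mul, det_mul, det_mul, hA, hB, mul_pow]

def sylvesterRows (k : ℕ) (PQ : Fin 2 → MvPolynomial (Fin 2) K) (x : Fin 2 × Fin (k + 1)) :
    MvPolynomial (Fin 2) K :=
  PQ x.1 * mono k x.2

def sylvesterIndex (k : ℕ) : Fin 2 × Fin (k + 1) ≃ Fin (2 * k + 1 + 1) :=
  finProdFinEquiv.trans (finCongr (by ring))

def sylvesterMatrix (k : ℕ) (PQ : Fin 2 → MvPolynomial (Fin 2) K) :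
    Matrix (Fin 2 × Fin (k + 1)) (Fin 2 × Fin (k + 1)) K :=
  (coeffMatrix (2 * k + 1) (sylvesterRows k PQ)).submatrix id (sylvesterIndex k)

lemma sylvesterMatrix_sum_smul (k : ℕ) (B : Matrix (Fin 2) (Fin 2) K)
    (PQ : Fin 2 → MvPolynomial (Fin 2) K) :
    sylvesterMatrix k (fun b => ∑ c, B b c • PQ c) = (B ⊗ₖ 1) * sylvesterMatrix k PQ := by
  have h : sylvesterRows k (fun b => ∑ c, B b c • PQ c) = fun x =>
      (∑ c, B x.1 c • PQ c) * ∑ j, (1 : Matrix (Fin (k + 1)) (Fin (k + 1)) K) x.2 j • mono k j := by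
    funext x
    simp [sylvesterRows, one_apply]
  rw [sylvesterMatrix, h, coeffMatrix_sum_smul_mul_sum_smul, submatrix_id_mul]
  rfl

lemma sylvesterMatrix_mul_substMatrix (k : ℕ) {PQ : Fin 2 → MvPolynomial (Fin 2) K}
    (hPQ : ∀ b, (PQ b).IsHomogeneous (k + 1)) (A : Matrix (Fin 2) (Fin 2) K) :
    sylvesterMatrix k PQ *
        (substMatrix (2 * k + 1) A).submatrix (sylvesterIndex k) (sylvesterIndex k) =
      (1 ⊗ₖ substMatrix k A) * sylvesterMatrix k (fun b => substMat A (PQ b)) := by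
  have hrows (x : Fin 2 × Fin (k + 1)) : (sylvesterRows k PQ x).IsHomogeneous (2 * k + 1) := by
    have h := (hPQ x.1).mul (isHomogeneous_mono (K := K) (Nat.lt_succ_iff.1 x.2.2))
    rwa [show k + 1 + k = 2 * k + 1 by ring] at h
  have h : (fun x => substMat A (sylvesterRows k PQ x)) = fun x =>
      (∑ b, (1 : Matrix (Fin 2) (Fin 2) K) x.1 b • substMat A (PQ b)) *
        ∑ j, substMatrix k A x.2 j • mono k j := by
    funext x
    rw [sylvesterRows, substMat_eq_substAlgHom, map_mul, ← substMat_eq_substAlgHom,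
      ((isHomogeneous_mono (K := K) (Nat.lt_succ_iff.1 x.2.2)).substMat A).eq_sum_mono]
    simp [one_apply, substMatrix, coeffMatrix]
  rw [sylvesterMatrix, sylvesterMatrix, ← submatrix_mul _ _ _ _ _ (sylvesterIndex k).bijective,
    ← coeffMatrix_substMat hrows, h, coeffMatrix_sum_smul_mul_sum_smul, submatrix_id_mul]
  rfl

lemma det_sylvesterMatrix_sum_smul (k : ℕ) (B : Matrix (Fin 2) (Fin 2) K)
    (PQ : Fin 2 → MvPolynomial (Fin 2) K) :
    (sylvesterMatrix k (fun b => ∑ c, B b c • PQ c)).det =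
      B.det ^ (k + 1) * (sylvesterMatrix k PQ).det := by
  rw [sylvesterMatrix_sum_smul, det_mul, det_kronecker, det_one, one_pow, mul_one, Fintype.card_fin]

lemma det_sylvesterMatrix_substMat {F : Type*} [Field F] (k : ℕ)
    {PQ : Fin 2 → MvPolynomial (Fin 2) F} (hPQ : ∀ b, (PQ b).IsHomogeneous (k + 1))
    {A : Matrix (Fin 2) (Fin 2) F} (hA : A.det ≠ 0) :
    (sylvesterMatrix k (fun b => substMat A (PQ b))).det =
      A.det ^ (k + 1) ^ 2 * (sylvesterMatrix k PQ).det := by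
  have h := congrArg det (sylvesterMatrix_mul_substMatrix k hPQ A)
  rw [det_mul, det_mul, det_submatrix_equiv_self, det_kronecker, det_one, one_pow, one_mul,
    det_substMatrix, det_substMatrix, Fintype.card_fin, ← pow_mul,
    Nat.choose_two_two_mul_add_two, pow_add] at h
  refine mul_left_cancel₀ (pow_ne_zero ((k + 1).choose 2 * 2) hA) ?_
  rw [← h]
  ring

lemma coeff_mul_mono (P : MvPolynomial (Fin 2) K) {m k i J : ℕ} (hi : i ≤ k) (hJ : J ≤ m + k) :
    coeff (monoExp (m + k) J) (P * mono k i) =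
      if i ≤ J ∧ J ≤ i + m then coeffVec m P (m - (J - i)) else 0 := by
  rw [coeff_mul_monomial', mul_one]
  by_cases hband : i ≤ J ∧ J ≤ i + m
  · have hle : monoExp k i ≤ monoExp (m + k) J := by
      rw [Finsupp.le_def, Fin.forall_fin_two]
      simp only [monoExp_apply_zero, monoExp_apply_one]
      omega
    have hsub : monoExp (m + k) J - monoExp k i =
        Finsupp.single 0 (m - (J - i)) + Finsupp.single 1 (m - (m - (J - i))) := by
      rw [Finsupp.ext_iff, Fin.forall_fin_two]
      simp only [Finsupp.coe_tsub, Pi.sub_apply, Finsupp.coe_add, Pi.add_apply, monoExp_apply_zero,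
        monoExp_apply_one, Finsupp.single_eq_same, Finsupp.single_eq_of_ne zero_ne_one,
        Finsupp.single_eq_of_ne one_ne_zero, add_zero, zero_add]
      omega
    rw [if_pos hle, if_pos hband, hsub, coeffVec]
  · refine (if_neg fun hle => hband ?_).trans (if_neg hband).symm
    rw [Finsupp.le_def, Fin.forall_fin_two] at hle
    simp only [monoExp_apply_zero, monoExp_apply_one] at hle
    omega

lemma sylRes_eq_det_sylvesterMatrix (k : ℕ) (PQ : Fin 2 → MvPolynomial (Fin 2) K) {p q : ℕ → K}
    (hp : ∀ i ≤ k + 1, p i = coeffVec (k + 1) (PQ 0) i)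
    (hq : ∀ i ≤ k + 1, q i = coeffVec (k + 1) (PQ 1) i) :
    sylRes (k + 1) (k + 1) p q = (sylvesterMatrix k PQ).det := by
  let e : Fin 2 × Fin (k + 1) ≃ Fin (k + 1 + (k + 1)) :=
    finProdFinEquiv.trans (finCongr (two_mul _))
  rw [sylRes, ← det_submatrix_equiv_self e]
  congr 1
  ext ⟨b, i⟩ ⟨c, j⟩
  have hi : (i : ℕ) ≤ k := Nat.lt_succ_iff.1 i.2
  have hJ : (j : ℕ) + (k + 1) * c ≤ k + 1 + k := by
    have := Nat.mul_le_mul_left (k + 1) (Nat.lt_succ_iff.1 c.2)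
    have := j.2
    omega
  have hrow : (e (b, i) : ℕ) = i + (k + 1) * b := rfl
  have hcol : (e (c, j) : ℕ) = j + (k + 1) * c := rfl
  have hcol' : (sylvesterIndex k (c, j) : ℕ) = j + (k + 1) * c := rfl
  simp only [sylvesterMatrix, sylvesterRows, coeffMatrix, submatrix_apply, of_apply, id, hrow, hcol,
    hcol', show 2 * k + 1 = k + 1 + k by ring, coeff_mul_mono _ hi hJ]
  generalize (j : ℕ) + (k + 1) * c = J at hJ ⊢
  fin_cases b <;>
    simp only [Fin.zero_eta, Fin.mk_one, Fin.isValue, mul_zero, mul_one, add_zero, zero_add,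
      Order.lt_add_one_iff, Fin.is_le', Nat.sub_eq_zero_of_le, zero_le, true_and, tsub_zero,
      add_tsub_cancel_right] <;>
    split_ifs <;>
    first | rfl | omega | exact hp _ (by omega) | exact hq _ (by omega)

lemma isHomogeneous_toForm (d : ℕ) (f : ℕ → K) : (toForm d f).IsHomogeneous d :=
  IsHomogeneous.sum _ _ _ fun i hi => by
    simpa [mul_assoc, Nat.add_sub_cancel' (Nat.lt_succ_iff.1 (Finset.mem_range.1 hi))] using
      ((isHomogeneous_X_pow (R := K) (0 : Fin 2) i).mul (isHomogeneous_X_pow 1 (d - i))).C_mul (f i)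

lemma coeffVec_toForm {d i : ℕ} (hi : i ≤ d) (f : ℕ → K) : coeffVec d (toForm d f) i = f i := by
  simp only [coeffVec, toForm, coeff_sum, mul_assoc, coeff_C_mul, X_pow_eq_monomial, monomial_mul,
    one_mul, coeff_monomial]
  rw [Finset.sum_eq_single_of_mem i (Finset.mem_range.2 (Nat.lt_succ_of_le hi)), if_pos rfl,
    mul_one]
  exact fun j _ hji => by rw [if_neg fun h => hji (by simpa using DFunLike.congr_fun h 0), mul_zero]

lemma mul_FA_eq_coeffVec (d : ℕ) (f g : ℕ → K) (l : K) (A : Matrix (Fin 2) (Fin 2) K) (i : ℕ) :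
    l * FA d f g A i = coeffVec d
      (∑ c, (l • A.adjugate) 0 c • substMat A (![toForm d f, toForm d g] c)) i := by
  simp only [FA, coeffVec, coeff_sub, coeff_C_mul, adjugate_fin_two, Matrix.smul_apply, of_apply,
    Fin.sum_univ_two, coeff_add, coeff_smul, smul_eq_mul, cons_val', cons_val_zero, cons_val_one,
    cons_val_fin_one]
  ring

lemma mul_GA_eq_coeffVec (d : ℕ) (f g : ℕ → K) (l : K) (A : Matrix (Fin 2) (Fin 2) K) (i : ℕ) :
    l * GA d f g A i = coeffVec d
      (∑ c, (l • A.adjugate) 1 c • substMat A (![toForm d f, toForm d g] c)) i := by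
  simp only [GA, coeffVec, coeff_add, coeff_neg, neg_mul, coeff_C_mul, adjugate_fin_two,
    Matrix.smul_apply, of_apply, Fin.sum_univ_two, coeff_smul, smul_eq_mul, cons_val',
    cons_val_zero,
    cons_val_one, cons_val_fin_one]
  ring

end BinaryForm

open BinaryForm

theorem statement0_general {K : Type*} [Field K] (d : ℕ) (f g : ℕ → K)
    (l : K) (A : Matrix (Fin 2) (Fin 2) K) (hA : A.det ≠ 0) :
    sylRes d d (fun i => l * FA d f g A i) (fun i => l * GA d f g A i) =
      l ^ (2 * d) * A.det ^ (d ^ 2 + d) * sylRes d d f g := by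
  cases d with
  | zero => simp [sylRes]
  | succ k =>
    let PQ : Fin 2 → MvPolynomial (Fin 2) K := ![toForm (k + 1) f, toForm (k + 1) g]
    have hPQ (b : Fin 2) : (PQ b).IsHomogeneous (k + 1) := by
      fin_cases b <;> exact isHomogeneous_toForm _ _
    rw [sylRes_eq_det_sylvesterMatrix k PQ (fun i hi => (coeffVec_toForm hi f).symm)
        (fun i hi => (coeffVec_toForm hi g).symm),
      sylRes_eq_det_sylvesterMatrix k (fun b => ∑ c, (l • A.adjugate) b c • substMat A (PQ c))
        (fun i _ => mul_FA_eq_coeffVec _ f g l A i) (fun i _ => mul_GA_eq_coeffVec _ f g l A i),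
      det_sylvesterMatrix_sum_smul, det_sylvesterMatrix_substMat k hPQ hA, det_smul, det_adjugate,
      Fintype.card_fin]
    ring

/-- For binary degree-`d` forms `F, G` over a field `K` (given by coefficient
sequences `f`, `g`), every `λ ∈ K^×` and `A ∈ GL₂(K)` satisfy
`Res_d(λF_A, λG_A) = λ^(2d) · det(A)^(d²+d) · Res_d(F,G)`. -/
theorem statement0 {K : Type*} [Field K] (d : ℕ) (hd : 2 ≤ d) (f g : ℕ → K)
    (hf : ∀ i, d < i → f i = 0) (hg : ∀ i, d < i → g i = 0)
    (l : K) (hl : l ≠ 0) (A : Matrix (Fin 2) (Fin 2) K) (hA : A.det ≠ 0) :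
    sylRes d d (fun i => l * FA d f g A i) (fun i => l * GA d f g A i) =
      l ^ (2 * d) * A.det ^ (d ^ 2 + d) * sylRes d d f g :=
  statement0_general d f g l A hA

end
end

section
/- Let R be a principal ideal domain with field of fractions K. Then GL₂(K) = Aff₂(K)·SL₂(R), i.e., every B ∈ GL₂(K) can be written as B = T·C with T ∈ GL₂(K) upper triangular and C ∈ SL₂(R). -/
/-!
The bottom row `(u, v)` of `B` is a `K`-multiple of a row `(c, d)` of coprime elements of `R`
(clear denominators, then divide out a greatest common divisor). Coprime rows complete to
matrices `C ∈ SL₂(R)`, and then `T := B C⁻¹ = B · adj C` has bottom-left entry `u d - v c = 0`.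
-/

open Matrix

theorem exists_isCoprime_mul_eq_mul {R : Type*} [CommRing R] [IsDomain R]
    [IsPrincipalIdealRing R] (p q : R) : ∃ c d : R, IsCoprime c d ∧ p * d = q * c := by
  rcases eq_or_ne q 0 with rfl | hq
  · exact ⟨1, 0, isCoprime_one_left, by simp⟩
  obtain ⟨c, d, g, hcd, rfl, rfl⟩ := UniqueFactorizationMonoid.exists_reduced_factors' p q hq
  exact ⟨c, d, hcd.isCoprime, by ring⟩

theorem IsFractionRing.exists_isCoprime_mul_algebraMap_eq {R K : Type*} [CommRing R]
    [IsDomain R] [IsPrincipalIdealRing R] [Field K] [Algebra R K] [IsFractionRing R K]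
    (u v : K) : ∃ c d : R, IsCoprime c d ∧ u * algebraMap R K d = v * algebraMap R K c := by
  obtain ⟨p, s, hs, rfl⟩ := IsFractionRing.div_surjective (A := R) u
  obtain ⟨q, t, ht, rfl⟩ := IsFractionRing.div_surjective (A := R) v
  obtain ⟨c, d, hcd, h⟩ := exists_isCoprime_mul_eq_mul (p * t) (q * s)
  have hs' := IsFractionRing.to_map_ne_zero_of_mem_nonZeroDivisors (K := K) hs
  have ht' := IsFractionRing.to_map_ne_zero_of_mem_nonZeroDivisors (K := K) ht
  have hK := congrArg (algebraMap R K) h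
  simp only [map_mul] at hK
  refine ⟨c, d, hcd, ?_⟩
  field_simp
  linear_combination hK

theorem Matrix.mul_adjugate_fin_two_apply_one_zero {α : Type*} [CommRing α]
    (B M : Matrix (Fin 2) (Fin 2) α) :
    (B * M.adjugate) 1 0 = B 1 0 * M 1 1 - B 1 1 * M 1 0 := by
  simp only [adjugate_fin_two, mul_apply, of_apply, cons_val', cons_val_zero, cons_val_fin_one,
    Fin.sum_univ_two, cons_val_one, mul_neg]
  ring

/-- If `R` is a PID with fraction field `K`, then
`GL₂(K) = Aff₂(K)·SL₂(R)`: every `B ∈ GL₂(K)` factors as `B = T·C` with `T` an invertible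
upper-triangular matrix over `K` and `C` the image of a matrix over `R` of determinant `1`. -/
theorem statement1 {R K : Type*} [CommRing R] [IsDomain R] [IsPrincipalIdealRing R]
    [Field K] [Algebra R K] [IsFractionRing R K]
    (B : Matrix (Fin 2) (Fin 2) K) (hB : B.det ≠ 0) :
    ∃ (T : Matrix (Fin 2) (Fin 2) K) (C : Matrix (Fin 2) (Fin 2) R),
      T.det ≠ 0 ∧ T 1 0 = 0 ∧ C.det = 1 ∧ B = T * C.map (algebraMap R K) := by
  obtain ⟨c, d, hcd, hrow⟩ :=
    IsFractionRing.exists_isCoprime_mul_algebraMap_eq (R := R) (B 1 0) (B 1 1)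
  obtain ⟨C, hc, hd⟩ := hcd.exists_SL2_row 1
  have hCK : (C.1.map (algebraMap R K)).det = 1 := by
    rw [← RingHom.mapMatrix_apply, ← RingHom.map_det, C.2, map_one]
  refine ⟨B * (C.1.map (algebraMap R K)).adjugate, C, ?_, ?_, C.2, ?_⟩
  · simpa [det_mul, det_adjugate, hCK] using hB
  · rw [mul_adjugate_fin_two_apply_one_zero]
    simp [hc, hd, hrow]
  · rw [Matrix.mul_assoc, adjugate_mul, hCK, one_smul, Matrix.mul_one]
end

section
/- Let R be a principal ideal domain with field of fractions K. Then GL₂(K) = SL₂(R)·Aff₂(K), i.e., every B ∈ GL₂(K) can be written as B = C·T with C ∈ SL₂(R) and T ∈ GL₂(K) upper triangular. -/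
/-!
Clearing denominators, the first column of `B` is a multiple of a vector `(a, b)` over `R`.
In a Bézout domain `(a, b) = g • (a', b')` with `a'`, `b'` coprime, and a coprime pair is the
first column of some `C ∈ SL₂(R)`. Then `C⁻¹ B` has first column `(*, 0)`.
-/

open Matrix MatrixGroups

section

variable {R : Type*} [CommRing R] [IsDomain R] [IsBezout R]

theorem IsBezout.exists_eq_mul_isCoprime (a b : R) :
    ∃ g a' b', a = g * a' ∧ b = g * b' ∧ IsCoprime a' b' := by
  classical
  let _ := IsBezout.toGCDDomain R
  obtain ⟨a', b', ha, hb, hunit⟩ := extract_gcd a b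
  exact ⟨_, a', b', ha, hb, (gcd_isUnit_iff_isRelPrime.mp hunit).isCoprime⟩

theorem IsBezout.exists_SL2_mulVec_eq (v : Fin 2 → R) :
    ∃ (C : SL(2, R)) (g : R), v = C *ᵥ ![g, 0] := by
  obtain ⟨g, a, b, hv₀, hv₁, hab⟩ := exists_eq_mul_isCoprime (v 0) (v 1)
  obtain ⟨C, hC₀, hC₁⟩ := hab.exists_SL2_col 0
  refine ⟨C, g, funext fun i => ?_⟩
  fin_cases i <;> simp [mulVec, dotProduct, Fin.sum_univ_two, hC₀, hC₁, hv₀, hv₁, mul_comm]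

theorem IsFractionRing.exists_SL2_map_mulVec_eq {K : Type*} [Field K] [Algebra R K]
    [IsFractionRing R K] (v : Fin 2 → K) :
    ∃ (C : SL(2, R)) (t : K),
      v = Matrix.SpecialLinearGroup.map (algebraMap R K) C *ᵥ ![t, 0] := by
  obtain ⟨⟨d, hd⟩, hint⟩ :=
    IsLocalization.exist_integer_multiples_of_finite (nonZeroDivisors R) v
  choose w hw using hint
  obtain ⟨C, g, hwC⟩ := IsBezout.exists_SL2_mulVec_eq w
  have hd' : algebraMap R K d ≠ 0 := IsFractionRing.to_map_ne_zero_of_mem_nonZeroDivisors hd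
  have hdv : algebraMap R K d • v =
      (C : Matrix (Fin 2) (Fin 2) R).map (algebraMap R K) *ᵥ ![algebraMap R K g, 0] := by
    ext i
    have hwi := congrArg (algebraMap R K) (congrFun hwC i)
    rw [hw, RingHom.map_mulVec] at hwi
    simpa [Algebra.smul_def, Function.comp_def, vecHead, vecTail] using hwi
  have hvec : ![(algebraMap R K d)⁻¹ * algebraMap R K g, 0] =
      (algebraMap R K d)⁻¹ • ![algebraMap R K g, 0] := by
    simp
  refine ⟨C, (algebraMap R K d)⁻¹ * algebraMap R K g, ?_⟩
  rw [Matrix.SpecialLinearGroup.map_apply_coe, RingHom.mapMatrix_apply, hvec, mulVec_smul, ← hdv,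
    inv_smul_smul₀ hd']

end

/-- If `R` is a PID with fraction field `K`, then
`GL₂(K) = SL₂(R)·Aff₂(K)`: every `B ∈ GL₂(K)` factors as `B = C·T` with `C` the image of a
matrix over `R` of determinant `1` and `T` an invertible upper-triangular matrix over `K`. -/
theorem statement2 {R K : Type*} [CommRing R] [IsDomain R] [IsPrincipalIdealRing R]
    [Field K] [Algebra R K] [IsFractionRing R K]
    (B : Matrix (Fin 2) (Fin 2) K) (hB : B.det ≠ 0) :
    ∃ (C : Matrix (Fin 2) (Fin 2) R) (T : Matrix (Fin 2) (Fin 2) K),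
      C.det = 1 ∧ T.det ≠ 0 ∧ T 1 0 = 0 ∧ B = C.map (algebraMap R K) * T := by
  obtain ⟨C, t, hcol⟩ := IsFractionRing.exists_SL2_map_mulVec_eq (R := R) fun i => B i 0
  set D := Matrix.SpecialLinearGroup.map (algebraMap R K) C
  refine ⟨C, (↑D⁻¹ : Matrix (Fin 2) (Fin 2) K) * B, C.prop, ?_, ?_, ?_⟩
  · rwa [det_mul, Matrix.SpecialLinearGroup.det_coe, one_mul]
  · change ((↑D⁻¹ : Matrix (Fin 2) (Fin 2) K) *ᵥ fun i => B i 0) 1 = 0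
    rw [hcol, mulVec_mulVec, ← Matrix.SpecialLinearGroup.coe_mul, inv_mul_cancel,
      Matrix.SpecialLinearGroup.coe_one, one_mulVec]
    rfl
  · change B = (D : Matrix (Fin 2) (Fin 2) K) * _
    rw [← Matrix.mul_assoc, ← Matrix.SpecialLinearGroup.coe_mul, mul_inv_cancel,
      Matrix.SpecialLinearGroup.coe_one, Matrix.one_mul]
end

section
/- Let R be a Dedekind domain with field of fractions K and let φ = F/G be a rational map of degree d ≥ 2 over K given by a model [F,G]. Then Res_R([φ]) = Res_R([φ]₁) as ideals of R; in particular, a model [F,G] over R is R-affine minimal if and only if it is R-minimal. -/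
/-!
Affine models are models, so `Res_R([φ]₁) ⊆ Res_R([φ])`. Conversely, let `r` be the resultant of
a model `[F, G]^(λ, A)` over `R`. It suffices to find, for every maximal ideal `p`, some `s ∉ p`
with `s r ∈ Res_R([φ]₁)`. Since `R_p` is a valuation ring, for `A = [[α, β], [γ, δ]]` one
of `γ/δ`, `δ/γ` lies in `R_p`, so `A` becomes upper triangular after multiplication on the right
by a shear `[[1, 0], [c, 1]]` with `c ∈ R_p`, preceded if necessary by the swap `[[0, 1], [1, 0]]`.
These matrices have entries in `R_p`, so the new model is still integral over `R_p`, and they do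
not change the resultant: on the chart `X = 1` the shear is the translation `t ↦ t + c`, which
preserves resultants, and the swap reverses the Sylvester matrix. Clearing the finitely many
denominators of the new model by some `s ∉ p` gives an affine model over `R` with resultant
`s^(2d) r`.
-/

noncomputable section

open Finset

section BinaryForms

open MvPolynomial

variable {K : Type*} [CommRing K]

def expVec (a b : ℕ) : Fin 2 →₀ ℕ := Finsupp.single 0 a + Finsupp.single 1 b

@[simp] lemma expVec_apply_zero (a b : ℕ) : expVec a b 0 = a := by simp [expVec]

@[simp] lemma expVec_apply_one (a b : ℕ) : expVec a b 1 = b := by simp [expVec]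

lemma expVec_inj {a b a' b' : ℕ} : expVec a b = expVec a' b' ↔ a = a' ∧ b = b' := by
  refine ⟨fun h => ⟨?_, ?_⟩, by rintro ⟨rfl, rfl⟩; rfl⟩
  · simpa using congrArg (· 0) h
  · simpa using congrArg (· 1) h

lemma eq_expVec (m : Fin 2 →₀ ℕ) : m = expVec (m 0) (m 1) := by
  ext x
  fin_cases x <;> simp

lemma degree_expVec (a b : ℕ) : (expVec a b).degree = a + b := by
  rw [Finsupp.degree_eq_sum, Fin.sum_univ_two, expVec_apply_zero, expVec_apply_one]

lemma coeffVec_apply (d : ℕ) (P : MvPolynomial (Fin 2) K) (i : ℕ) :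
    coeffVec d P i = coeff (expVec i (d - i)) P := rfl

lemma monomial_expVec (a b : ℕ) (c : K) :
    (monomial (expVec a b) c : MvPolynomial (Fin 2) K) = C c * X 0 ^ a * X 1 ^ b := by
  rw [monomial_eq, Finsupp.prod_fintype _ _ (fun i => pow_zero _), Fin.prod_univ_two,
    expVec_apply_zero, expVec_apply_one, mul_assoc]

lemma toForm_eq_sum_monomial (d : ℕ) (f : ℕ → K) :
    toForm d f = ∑ i ∈ range (d + 1), monomial (expVec i (d - i)) (f i) := by
  simp [toForm, monomial_expVec]

lemma toForm_isHomogeneous (d : ℕ) (f : ℕ → K) : (toForm d f).IsHomogeneous d := by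
  rw [toForm_eq_sum_monomial]
  refine IsHomogeneous.sum _ _ _ fun i hi => isHomogeneous_monomial _ ?_
  rw [degree_expVec]
  have := mem_range.mp hi
  omega

lemma coeffVec_toForm (d : ℕ) (f : ℕ → K) {i : ℕ} (hi : i ≤ d) :
    coeffVec d (toForm d f) i = f i := by
  rw [coeffVec_apply, toForm_eq_sum_monomial, coeff_sum,
    Finset.sum_eq_single_of_mem i (mem_range.mpr (by omega))]
  · simp
  · intro k _ hk
    rw [coeff_monomial, if_neg fun h => hk (expVec_inj.mp h).1]

lemma coeffVec_eq_zero_of_lt {d : ℕ} {P : MvPolynomial (Fin 2) K}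
    (hP : P.IsHomogeneous d) {i : ℕ} (hi : d < i) : coeffVec d P i = 0 :=
  hP.coeff_eq_zero (by rw [← expVec, degree_expVec]; omega)

lemma toForm_coeffVec {d : ℕ} {P : MvPolynomial (Fin 2) K}
    (hP : P.IsHomogeneous d) : toForm d (coeffVec d P) = P := by
  ext m
  obtain ⟨a, b, rfl⟩ : ∃ a b, m = expVec a b := ⟨_, _, eq_expVec m⟩
  rw [toForm_eq_sum_monomial, coeff_sum]
  by_cases hm : a + b = d
  · rw [Finset.sum_eq_single_of_mem a (mem_range.mpr (by omega))]
    · rw [coeff_monomial, if_pos (by rw [expVec_inj]; omega), coeffVec_apply,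
        show d - a = b by omega]
    · intro k _ hk
      rw [coeff_monomial, if_neg fun h => hk (expVec_inj.mp h).1]
  · rw [hP.coeff_eq_zero (by rwa [degree_expVec]), Finset.sum_eq_zero]
    intro k hk
    have := mem_range.mp hk
    rw [coeff_monomial, if_neg fun h => hm (by rw [expVec_inj] at h; omega)]

end BinaryForms

section Substitution

open MvPolynomial

variable {K L : Type*} [CommRing K] [CommRing L]

def substHom (A : Matrix (Fin 2) (Fin 2) K) : MvPolynomial (Fin 2) K →+* MvPolynomial (Fin 2) K :=
  eval₂Hom C fun k => C (A k 0) * X 0 + C (A k 1) * X 1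

@[simp] lemma substHom_C (A : Matrix (Fin 2) (Fin 2) K) (c : K) : substHom A (C c) = C c := by
  simp [substHom]

@[simp] lemma substHom_X (A : Matrix (Fin 2) (Fin 2) K) (k : Fin 2) :
    substHom A (X k) = C (A k 0) * X 0 + C (A k 1) * X 1 := by
  simp [substHom]

lemma substMat_isHomogeneous {n : ℕ} {P : MvPolynomial (Fin 2) K}
    (hP : P.IsHomogeneous n) (A : Matrix (Fin 2) (Fin 2) K) :
    (substMat A P).IsHomogeneous n := by
  simpa [substMat] using hP.eval₂ C (fun k => C (A k 0) * X 0 + C (A k 1) * X 1)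
    (fun r => isHomogeneous_C _ _)
    (fun k => (isHomogeneous_C_mul_X _ _).add (isHomogeneous_C_mul_X _ _))

lemma substHom_mul (A B : Matrix (Fin 2) (Fin 2) K) :
    substHom (A * B) = (substHom B).comp (substHom A) := by
  refine ringHom_ext (fun c => by simp) fun k => ?_
  simp only [substHom_X, RingHom.comp_apply, map_add, map_mul, substHom_C, Matrix.mul_apply,
    Fin.sum_univ_two]
  ring

lemma substHom_map (φ : K →+* L) (A : Matrix (Fin 2) (Fin 2) K) :
    (substHom (A.map φ)).comp (map φ) = (map φ).comp (substHom A) :=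
  ringHom_ext (fun c => by simp) fun k => by simp

end Substitution

section Transform

open MvPolynomial

variable {K L : Type*} [CommRing K] [CommRing L]

lemma FA_eq_coeffVec (d : ℕ) (f g : ℕ → K) (A : Matrix (Fin 2) (Fin 2) K) :
    FA d f g A = coeffVec d
      (C (A 1 1) * substHom A (toForm d f) - C (A 0 1) * substHom A (toForm d g)) := rfl

lemma GA_eq_coeffVec (d : ℕ) (f g : ℕ → K) (A : Matrix (Fin 2) (Fin 2) K) :
    GA d f g A = coeffVec d
      (-C (A 1 0) * substHom A (toForm d f) + C (A 0 0) * substHom A (toForm d g)) := rfl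

lemma isHomogeneous_FA_form (d : ℕ) (f g : ℕ → K) (A : Matrix (Fin 2) (Fin 2) K) :
    (C (A 1 1) * substHom A (toForm d f) - C (A 0 1) * substHom A (toForm d g)).IsHomogeneous d :=
  ((substMat_isHomogeneous (toForm_isHomogeneous d f) A).C_mul _).sub
    ((substMat_isHomogeneous (toForm_isHomogeneous d g) A).C_mul _)

lemma isHomogeneous_GA_form (d : ℕ) (f g : ℕ → K) (A : Matrix (Fin 2) (Fin 2) K) :
    (-C (A 1 0) * substHom A (toForm d f) +
      C (A 0 0) * substHom A (toForm d g)).IsHomogeneous d := by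
  rw [neg_mul]
  exact ((substMat_isHomogeneous (toForm_isHomogeneous d f) A).C_mul _).neg.add
    ((substMat_isHomogeneous (toForm_isHomogeneous d g) A).C_mul _)

lemma toForm_FA (d : ℕ) (f g : ℕ → K) (A : Matrix (Fin 2) (Fin 2) K) :
    toForm d (FA d f g A) =
      C (A 1 1) * substHom A (toForm d f) - C (A 0 1) * substHom A (toForm d g) :=
  toForm_coeffVec (isHomogeneous_FA_form d f g A)

lemma toForm_GA (d : ℕ) (f g : ℕ → K) (A : Matrix (Fin 2) (Fin 2) K) :
    toForm d (GA d f g A) =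
      -C (A 1 0) * substHom A (toForm d f) + C (A 0 0) * substHom A (toForm d g) :=
  toForm_coeffVec (isHomogeneous_GA_form d f g A)

lemma FA_eq_zero_of_lt (d : ℕ) (f g : ℕ → K) (A : Matrix (Fin 2) (Fin 2) K)
    {i : ℕ} (hi : d < i) : FA d f g A i = 0 :=
  coeffVec_eq_zero_of_lt (isHomogeneous_FA_form d f g A) hi

lemma GA_eq_zero_of_lt (d : ℕ) (f g : ℕ → K) (A : Matrix (Fin 2) (Fin 2) K)
    {i : ℕ} (hi : d < i) : GA d f g A i = 0 :=
  coeffVec_eq_zero_of_lt (isHomogeneous_GA_form d f g A) hi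

lemma FA_mul (d : ℕ) (f g : ℕ → K) (A B : Matrix (Fin 2) (Fin 2) K) :
    FA d f g (A * B) = FA d (FA d f g A) (GA d f g A) B := by
  rw [FA_eq_coeffVec, FA_eq_coeffVec, toForm_FA, toForm_GA, substHom_mul]
  simp only [RingHom.comp_apply, map_sub, map_add, map_mul, map_neg, substHom_C,
    Matrix.mul_apply, Fin.sum_univ_two]
  congr 1
  ring

lemma GA_mul (d : ℕ) (f g : ℕ → K) (A B : Matrix (Fin 2) (Fin 2) K) :
    GA d f g (A * B) = GA d (FA d f g A) (GA d f g A) B := by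
  rw [GA_eq_coeffVec, GA_eq_coeffVec, toForm_FA, toForm_GA, substHom_mul]
  simp only [RingHom.comp_apply, map_sub, map_add, map_mul, map_neg, substHom_C,
    Matrix.mul_apply, Fin.sum_univ_two]
  congr 1
  ring

lemma toForm_const_mul (d : ℕ) (u : K) (f : ℕ → K) :
    toForm d (fun i => u * f i) = C u * toForm d f := by
  simp only [toForm, C_mul, Finset.mul_sum, mul_assoc]

lemma FA_const_mul (d : ℕ) (u : K) (f g : ℕ → K) (A : Matrix (Fin 2) (Fin 2) K) :
    FA d (fun i => u * f i) (fun i => u * g i) A = fun i => u * FA d f g A i := by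
  funext i
  simp only [FA_eq_coeffVec, coeffVec_apply, ← coeff_C_mul, toForm_const_mul, map_mul,
    substHom_C]
  congr 1
  ring

lemma GA_const_mul (d : ℕ) (u : K) (f g : ℕ → K) (A : Matrix (Fin 2) (Fin 2) K) :
    GA d (fun i => u * f i) (fun i => u * g i) A = fun i => u * GA d f g A i := by
  funext i
  simp only [GA_eq_coeffVec, coeffVec_apply, ← coeff_C_mul, toForm_const_mul, map_mul,
    substHom_C]
  congr 1
  ring

lemma const_mul_FA_mul (d : ℕ) (l : K) (f g : ℕ → K) (A B : Matrix (Fin 2) (Fin 2) K) :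
    (fun i => l * FA d f g (A * B) i) =
      FA d (fun i => l * FA d f g A i) (fun i => l * GA d f g A i) B := by
  rw [FA_const_mul, FA_mul]

lemma const_mul_GA_mul (d : ℕ) (l : K) (f g : ℕ → K) (A B : Matrix (Fin 2) (Fin 2) K) :
    (fun i => l * GA d f g (A * B) i) =
      GA d (fun i => l * FA d f g A i) (fun i => l * GA d f g A i) B := by
  rw [GA_const_mul, GA_mul]

lemma toForm_comp (d : ℕ) (φ : K →+* L) (f : ℕ → K) : toForm d (φ ∘ f) = map φ (toForm d f) := by
  simp [toForm]

lemma coeffVec_map (d : ℕ) (φ : K →+* L) (P : MvPolynomial (Fin 2) K) :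
    coeffVec d (map φ P) = φ ∘ coeffVec d P := by
  funext i
  simp [coeffVec_apply, coeff_map]

lemma FA_comp (d : ℕ) (φ : K →+* L) (f g : ℕ → K) (A : Matrix (Fin 2) (Fin 2) K) :
    FA d (φ ∘ f) (φ ∘ g) (A.map φ) = φ ∘ FA d f g A := by
  simp only [FA_eq_coeffVec, toForm_comp, ← RingHom.comp_apply (substHom _), substHom_map,
    Matrix.map_apply, ← coeffVec_map, map_sub, map_mul, map_C, RingHom.comp_apply]

lemma GA_comp (d : ℕ) (φ : K →+* L) (f g : ℕ → K) (A : Matrix (Fin 2) (Fin 2) K) :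
    GA d (φ ∘ f) (φ ∘ g) (A.map φ) = φ ∘ GA d f g A := by
  simp only [GA_eq_coeffVec, toForm_comp, ← RingHom.comp_apply (substHom _), substHom_map,
    Matrix.map_apply, ← coeffVec_map, map_add, map_neg, map_mul, map_C, RingHom.comp_apply]

lemma FA_mem_of_mem {O : Subring K} {d : ℕ} {f g : ℕ → K} (hf : ∀ i, f i ∈ O)
    (hg : ∀ i, g i ∈ O) {A : Matrix (Fin 2) (Fin 2) K} (hA : ∀ k l, A k l ∈ O) (i : ℕ) :
    FA d f g A i ∈ O := by
  let f' : ℕ → O := fun i => ⟨f i, hf i⟩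
  let g' : ℕ → O := fun i => ⟨g i, hg i⟩
  let A' : Matrix (Fin 2) (Fin 2) O := Matrix.of fun k l => ⟨A k l, hA k l⟩
  exact (congrFun (FA_comp d O.subtype f' g' A') i : FA d f g A i = _) ▸ (FA d f' g' A' i).2

lemma GA_mem_of_mem {O : Subring K} {d : ℕ} {f g : ℕ → K} (hf : ∀ i, f i ∈ O)
    (hg : ∀ i, g i ∈ O) {A : Matrix (Fin 2) (Fin 2) K} (hA : ∀ k l, A k l ∈ O) (i : ℕ) :
    GA d f g A i ∈ O := by
  let f' : ℕ → O := fun i => ⟨f i, hf i⟩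
  let g' : ℕ → O := fun i => ⟨g i, hg i⟩
  let A' : Matrix (Fin 2) (Fin 2) O := Matrix.of fun k l => ⟨A k l, hA k l⟩
  exact (congrFun (GA_comp d O.subtype f' g' A') i : GA d f g A i = _) ▸ (GA d f' g' A' i).2

def PreservesSylRes (B : Matrix (Fin 2) (Fin 2) K) : Prop :=
  ∀ d (p q : ℕ → K), sylRes d d (FA d p q B) (GA d p q B) = sylRes d d p q

lemma PreservesSylRes.mul {A B : Matrix (Fin 2) (Fin 2) K} (hA : PreservesSylRes A)
    (hB : PreservesSylRes B) : PreservesSylRes (A * B) := fun d p q => by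
  rw [FA_mul, GA_mul, hB, hA]

end Transform

namespace Polynomial

variable {R : Type*} [CommRing R]

lemma coeff_taylor_of_natDegree_le {f : R[X]} {n : ℕ} (hf : f.natDegree ≤ n) (r : R) :
    (taylor r f).coeff n = f.coeff n := by
  rcases hf.eq_or_lt with rfl | hlt
  · have := leadingCoeff_taylor (f := f) (r := r)
    rwa [leadingCoeff, leadingCoeff, natDegree_taylor] at this
  · rw [coeff_eq_zero_of_natDegree_lt hlt,
      coeff_eq_zero_of_natDegree_lt ((natDegree_taylor f r).symm ▸ hlt)]

/-- Raising the formal degrees multiplies both sides by the same powers of leading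
coefficients, so this reduces to `Polynomial.resultant_taylor`. -/
lemma resultant_taylor_of_natDegree_le {f g : R[X]} {m n : ℕ} (hf : f.natDegree ≤ m)
    (hg : g.natDegree ≤ n) (r : R) :
    resultant (taylor r f) (taylor r g) m n = resultant f g m n := by
  obtain ⟨a, rfl⟩ := Nat.exists_eq_add_of_le hf
  obtain ⟨b, rfl⟩ := Nat.exists_eq_add_of_le hg
  conv_lhs => rw [← natDegree_taylor f r, ← natDegree_taylor g r]
  rw [resultant_add_left_deg _ _ _ _ _ le_rfl, resultant_add_right_deg _ _ _ _ _ le_rfl,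
    resultant_add_left_deg _ _ _ _ _ le_rfl, resultant_add_right_deg _ _ _ _ _ le_rfl,
    resultant_taylor]
  simp only [natDegree_taylor, coeff_taylor_of_natDegree_le le_self_add,
    coeff_taylor_of_natDegree_le le_rfl]

end Polynomial

section Dehomogenization

open Polynomial

variable {K : Type*} [CommRing K]

/-- `F(1, t)` for the binary form `F = toForm d p` (see `aeval_toForm`). -/
def dehom (d : ℕ) (p : ℕ → K) : K[X] := ∑ k ∈ range (d + 1), C (p (d - k)) * X ^ k

lemma coeff_dehom (d : ℕ) (p : ℕ → K) (k : ℕ) :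
    (dehom d p).coeff k = if k ≤ d then p (d - k) else 0 := by
  simp only [dehom, finsetSum_coeff, coeff_C_mul_X_pow, Finset.sum_ite_eq, mem_range,
    Nat.lt_succ_iff]

lemma natDegree_dehom_le (d : ℕ) (p : ℕ → K) : (dehom d p).natDegree ≤ d :=
  natDegree_le_iff_coeff_eq_zero.mpr fun k hk => by
    rw [coeff_dehom, if_neg (by exact_mod_cast hk.not_ge)]

lemma sylRes_eq_resultant (d : ℕ) (p q : ℕ → K) :
    sylRes d d p q = resultant (dehom d q) (dehom d p) d d := by
  rw [sylRes, resultant, ← Matrix.det_transpose (sylvester _ _ _ _)]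
  congr 1
  ext i j
  induction i using Fin.addCases <;>
    simp only [Matrix.transpose_apply, Matrix.of_apply, sylvester, Fin.addCases_left,
      Fin.addCases_right, Fin.val_castAdd, Fin.val_natAdd, Set.mem_Icc, coeff_dehom] <;>
    split_ifs <;> first | rfl | omega | (congr 1; omega)

lemma sylRes_congr (d : ℕ) {p q p' q' : ℕ → K}
    (hp : ∀ i ≤ d, p i = p' i) (hq : ∀ i ≤ d, q i = q' i) :
    sylRes d d p q = sylRes d d p' q' := by
  have hdehom : ∀ {f f' : ℕ → K}, (∀ i ≤ d, f i = f' i) → dehom d f = dehom d f' :=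
    fun h => sum_congr rfl fun k _ => by rw [h _ (Nat.sub_le d k)]
  rw [sylRes_eq_resultant, sylRes_eq_resultant, hdehom hp, hdehom hq]

lemma dehom_const_mul (d : ℕ) (u : K) (p : ℕ → K) :
    dehom d (fun i => u * p i) = C u * dehom d p := by
  simp only [dehom, C_mul, Finset.mul_sum, mul_assoc]

lemma sylRes_const_mul (d : ℕ) (u : K) (p q : ℕ → K) :
    sylRes d d (fun i => u * p i) (fun i => u * q i) = u ^ (d + d) * sylRes d d p q := by
  rw [sylRes_eq_resultant, sylRes_eq_resultant, dehom_const_mul, dehom_const_mul,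
    resultant_C_mul_left, resultant_C_mul_right, pow_add]
  ring

lemma aeval_toForm (d : ℕ) (f : ℕ → K) :
    MvPolynomial.aeval ![1, X] (toForm d f) = dehom d f := by
  simp only [toForm, dehom, map_sum, map_mul, map_pow, MvPolynomial.aeval_C,
    MvPolynomial.aeval_X, algebraMap_eq, Matrix.cons_val_zero, Matrix.cons_val_one, one_pow,
    mul_one]
  rw [← sum_range_reflect]
  refine sum_congr rfl fun k hk => ?_
  rw [show d + 1 - 1 - k = d - k by omega, show d - (d - k) = k by have := mem_range.mp hk; omega]

lemma dehom_coeffVec {d : ℕ} {P : MvPolynomial (Fin 2) K} (hP : P.IsHomogeneous d) :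
    dehom d (coeffVec d P) = MvPolynomial.aeval ![1, X] P := by
  rw [← aeval_toForm, toForm_coeffVec hP]

lemma dehom_FA (d : ℕ) (p q : ℕ → K) (A : Matrix (Fin 2) (Fin 2) K) :
    dehom d (FA d p q A) = C (A 1 1) * MvPolynomial.aeval ![1, X] (substHom A (toForm d p)) -
      C (A 0 1) * MvPolynomial.aeval ![1, X] (substHom A (toForm d q)) := by
  rw [FA_eq_coeffVec, dehom_coeffVec (isHomogeneous_FA_form d p q A)]
  simp [algebraMap_eq]

lemma dehom_GA (d : ℕ) (p q : ℕ → K) (A : Matrix (Fin 2) (Fin 2) K) :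
    dehom d (GA d p q A) = -C (A 1 0) * MvPolynomial.aeval ![1, X] (substHom A (toForm d p)) +
      C (A 0 0) * MvPolynomial.aeval ![1, X] (substHom A (toForm d q)) := by
  rw [GA_eq_coeffVec, dehom_coeffVec (isHomogeneous_GA_form d p q A)]
  simp [algebraMap_eq]

end Dehomogenization

section Shear

open Polynomial

variable {K : Type*} [CommRing K]

def shearMat (c : K) : Matrix (Fin 2) (Fin 2) K := !![1, 0; c, 1]

@[simp] lemma shearMat_apply_zero_zero (c : K) : shearMat c 0 0 = 1 := rfl
@[simp] lemma shearMat_apply_zero_one (c : K) : shearMat c 0 1 = 0 := rfl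
@[simp] lemma shearMat_apply_one_zero (c : K) : shearMat c 1 0 = c := rfl
@[simp] lemma shearMat_apply_one_one (c : K) : shearMat c 1 1 = 1 := rfl

lemma aeval_substHom_shearMat (c : K) (P : MvPolynomial (Fin 2) K) :
    MvPolynomial.aeval ![1, X] (substHom (shearMat c) P) =
      taylor c (MvPolynomial.aeval ![1, X] P) := by
  have : (MvPolynomial.aeval ![(1 : K[X]), X]).toRingHom.comp (substHom (shearMat c)) =
      (taylorAlgHom c).toRingHom.comp (MvPolynomial.aeval ![1, X]).toRingHom := by
    refine MvPolynomial.ringHom_ext (fun a => by simp [algebraMap_eq]) fun k => ?_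
    fin_cases k <;> simp [algebraMap_eq, add_comm]
  exact RingHom.congr_fun this P

lemma preservesSylRes_shearMat (c : K) : PreservesSylRes (shearMat c) := fun d p q => by
  have hF : dehom d (FA d p q (shearMat c)) = taylor c (dehom d p) := by
    rw [dehom_FA, aeval_substHom_shearMat, aeval_toForm, shearMat_apply_one_one,
      shearMat_apply_zero_one, C_0, C_1, one_mul, zero_mul, sub_zero]
  have hG : dehom d (GA d p q (shearMat c)) =
      taylor c (dehom d q) + taylor c (dehom d p) * C (-c) := by
    rw [dehom_GA, aeval_substHom_shearMat, aeval_substHom_shearMat, aeval_toForm, aeval_toForm,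
      shearMat_apply_one_zero, shearMat_apply_zero_zero, C_1, one_mul, C_neg]
    ring
  rw [sylRes_eq_resultant, sylRes_eq_resultant, hF, hG,
    resultant_add_mul_left _ _ _ _ _ (by simp)
      ((natDegree_taylor _ _).trans_le (natDegree_dehom_le d p)),
    resultant_taylor_of_natDegree_le (natDegree_dehom_le d q) (natDegree_dehom_le d p)]

end Shear

section Swap

variable {K : Type*} [CommRing K]

/-- Reversing both coefficient sequences reverses the order of the rows and columns of the
Sylvester matrix; the sign change is harmless since the matrix has even size. -/
lemma sylRes_neg_reverse (d : ℕ) (p q : ℕ → K) :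
    sylRes d d (fun i => -q (d - i)) (fun i => -p (d - i)) = sylRes d d p q := by
  have hrev : ∀ k : Fin (d + d), ((Fin.revPerm k : Fin (d + d)) : ℕ) = d + d - 1 - k := by
    intro k
    rw [Fin.revPerm_apply, Fin.val_rev]
    omega
  rw [sylRes, sylRes, ← neg_neg (Matrix.of _), Matrix.det_neg, Fintype.card_fin,
    Even.neg_one_pow ⟨d, rfl⟩, one_mul, ← Matrix.det_submatrix_equiv_self Fin.revPerm]
  congr 1
  ext i j
  simp only [Matrix.neg_apply, Matrix.of_apply, Matrix.submatrix_apply, hrev]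
  split_ifs <;> first | (exfalso; omega) | rw [neg_zero] | (rw [neg_neg]; congr 2; omega)

def swapMat : Matrix (Fin 2) (Fin 2) K := !![0, 1; 1, 0]

@[simp] lemma swapMat_apply_zero_zero : (swapMat : Matrix (Fin 2) (Fin 2) K) 0 0 = 0 := rfl
@[simp] lemma swapMat_apply_zero_one : (swapMat : Matrix (Fin 2) (Fin 2) K) 0 1 = 1 := rfl
@[simp] lemma swapMat_apply_one_zero : (swapMat : Matrix (Fin 2) (Fin 2) K) 1 0 = 1 := rfl
@[simp] lemma swapMat_apply_one_one : (swapMat : Matrix (Fin 2) (Fin 2) K) 1 1 = 0 := rfl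

open MvPolynomial in
lemma substHom_swapMat_toForm (d : ℕ) (f : ℕ → K) :
    substHom swapMat (toForm d f) = toForm d (fun i => f (d - i)) := by
  simp only [toForm, map_sum, map_mul, map_pow, substHom_C, substHom_X, swapMat_apply_zero_zero,
    swapMat_apply_zero_one, swapMat_apply_one_zero, swapMat_apply_one_one, map_zero, map_one,
    zero_mul, one_mul, zero_add, add_zero]
  rw [← sum_range_reflect]
  refine sum_congr rfl fun k hk => ?_
  rw [show d + 1 - 1 - k = d - k by omega, show d - (d - k) = k by have := mem_range.mp hk; omega]
  ring

open MvPolynomial in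
lemma FA_swapMat (d : ℕ) (p q : ℕ → K) {i : ℕ} (hi : i ≤ d) : FA d p q swapMat i = -q (d - i) := by
  rw [FA_eq_coeffVec, swapMat_apply_one_one, swapMat_apply_zero_one, map_zero, map_one, zero_mul,
    one_mul,
    zero_sub, substHom_swapMat_toForm, coeffVec_apply, coeff_neg, ← coeffVec_apply,
    coeffVec_toForm d _ hi]

open MvPolynomial in
lemma GA_swapMat (d : ℕ) (p q : ℕ → K) {i : ℕ} (hi : i ≤ d) : GA d p q swapMat i = -p (d - i) := by
  rw [GA_eq_coeffVec, swapMat_apply_one_zero, swapMat_apply_zero_zero, map_zero, map_one, zero_mul,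
    add_zero, neg_one_mul, substHom_swapMat_toForm, coeffVec_apply, coeff_neg, ← coeffVec_apply,
    coeffVec_toForm d _ hi]

lemma preservesSylRes_swapMat : PreservesSylRes (swapMat : Matrix (Fin 2) (Fin 2) K) :=
  fun d p q => by
    rw [sylRes_congr d (fun i hi => FA_swapMat d p q hi) (fun i hi => GA_swapMat d p q hi),
      sylRes_neg_reverse]

end Swap

section Triangularization

variable {K : Type*} [Field K]

lemma exists_preservesSylRes_mul_apply_one_zero_eq_zero (O : Subring K)
    (hO : ∀ x : K, x ∈ O ∨ x⁻¹ ∈ O) {A : Matrix (Fin 2) (Fin 2) K} (hA : A.det ≠ 0) :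
    ∃ B : Matrix (Fin 2) (Fin 2) K, (∀ k l, B k l ∈ O) ∧ B.det ≠ 0 ∧ PreservesSylRes B ∧
      (A * B) 1 0 = 0 := by
  have shear_mem : ∀ {c : K}, c ∈ O → ∀ k l, shearMat c k l ∈ O := fun hc k l => by
    fin_cases k <;> fin_cases l <;> simp [hc, O.one_mem, O.zero_mem]
  have swap_mem : ∀ k l, (swapMat : Matrix (Fin 2) (Fin 2) K) k l ∈ O := fun k l => by
    fin_cases k <;> fin_cases l <;> simp [O.one_mem, O.zero_mem]
  have mul_mem' : ∀ {B C : Matrix (Fin 2) (Fin 2) K}, (∀ k l, B k l ∈ O) → (∀ k l, C k l ∈ O) →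
      ∀ k l, (B * C) k l ∈ O := fun hB hC k l => by
    rw [Matrix.mul_apply]
    exact sum_mem fun j _ => mul_mem (hB _ _) (hC _ _)
  have det_shear : ∀ c : K, (shearMat c).det = 1 := fun c => by
    simp [Matrix.det_fin_two]
  by_cases h : A 1 1 ≠ 0 ∧ A 1 0 / A 1 1 ∈ O
  · refine ⟨shearMat (-(A 1 0 / A 1 1)), shear_mem (neg_mem h.2), by simp [det_shear],
      preservesSylRes_shearMat _, ?_⟩
    simp only [Matrix.mul_apply, Fin.sum_univ_two, shearMat_apply_zero_zero,
      shearMat_apply_one_zero, mul_one, mul_neg]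
    field_simp [h.1]
    ring
  · have h10 : A 1 0 ≠ 0 := by
      intro h10
      have h11 : A 1 1 ≠ 0 := fun h11 => hA (by rw [Matrix.det_fin_two, h10, h11]; ring)
      exact h ⟨h11, by rw [h10, zero_div]; exact O.zero_mem⟩
    have hy : A 1 1 / A 1 0 ∈ O := by
      by_cases h11 : A 1 1 = 0
      · rw [h11, zero_div]
        exact O.zero_mem
      · rw [← inv_div]
        exact (hO _).resolve_left fun hx => h ⟨h11, hx⟩
    refine ⟨swapMat * shearMat (-(A 1 1 / A 1 0)), mul_mem' swap_mem (shear_mem (neg_mem hy)),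
      by simp [Matrix.det_fin_two, det_shear],
      preservesSylRes_swapMat.mul (preservesSylRes_shearMat _), ?_⟩
    simp only [Matrix.mul_apply, Fin.sum_univ_two, shearMat_apply_zero_zero,
      shearMat_apply_one_zero, swapMat_apply_zero_zero, swapMat_apply_zero_one,
      swapMat_apply_one_zero, swapMat_apply_one_one, mul_one, one_mul, mul_neg, zero_mul, zero_add,
      add_zero, neg_zero]
    field_simp
    ring

end Triangularization

lemma Ideal.mem_of_forall_isMaximal_exists_mul_mem {R : Type*} [CommRing R] {I : Ideal R} {r : R}
    (h : ∀ p : Ideal R, p.IsMaximal → ∃ s ∉ p, s * r ∈ I) : r ∈ I := by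
  by_cases hcolon : I.colon (Ideal.span {r}) = ⊤
  · have := Submodule.mem_colon_span_singleton.mp (hcolon ▸ Submodule.mem_top (x := (1 : R)))
    rwa [one_smul] at this
  · obtain ⟨p, hp, hle⟩ := Ideal.exists_le_maximal _ hcolon
    obtain ⟨s, hs, hsr⟩ := h p hp
    exact absurd (hle (Submodule.mem_colon_span_singleton.mpr hsr)) hs

section AtPrime

variable {R : Type*} (K : Type*) [CommRing R] [Field K] [Algebra R K] [IsFractionRing R K]

abbrev subalgebraAtPrime [IsDomain R] (p : Ideal R) [p.IsPrime] : Subalgebra R K :=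
  Localization.subalgebra.ofField K p.primeCompl p.primeCompl_le_nonZeroDivisors

variable {K}

lemma mem_or_inv_mem_subalgebraAtPrime [IsDedekindDomain R] (p : Ideal R) [p.IsPrime] (x : K) :
    x ∈ subalgebraAtPrime K p ∨ x⁻¹ ∈ subalgebraAtPrime K p := by
  by_cases hp : p = ⊥
  · obtain ⟨a, b, hb, rfl⟩ := IsFractionRing.div_surjective (A := R) x
    refine .inl ⟨a, b, ?_, div_eq_mul_inv _ _⟩
    simpa [hp] using nonZeroDivisors.ne_zero hb
  · have : IsDiscreteValuationRing (subalgebraAtPrime K p) :=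
      IsLocalization.AtPrime.isDiscreteValuationRing_of_dedekind_domain R hp _
    rcases ValuationRing.isInteger_or_isInteger (subalgebraAtPrime K p) x with ⟨y, rfl⟩ | ⟨y, hy⟩
    · exact .inl y.2
    · exact .inr (hy ▸ y.2)

lemma exists_notMem_forall_isInteger_mul [IsDomain R] (p : Ideal R) [p.IsPrime] {d : ℕ} {x : ℕ → K}
    (hx : ∀ i, x i ∈ subalgebraAtPrime K p) (hx0 : ∀ i, d < i → x i = 0) :
    ∃ s ∉ p, ∀ i, IsLocalization.IsInteger R (algebraMap R K s * x i) := by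
  obtain ⟨⟨s, hs⟩, hint⟩ := IsLocalization.exist_integer_multiples p.primeCompl (range (d + 1))
    fun i => (⟨x i, hx i⟩ : subalgebraAtPrime K p)
  refine ⟨s, hs, fun i => ?_⟩
  by_cases hi : i ≤ d
  · obtain ⟨a, ha⟩ := hint i (mem_range.mpr (Nat.lt_succ_of_le hi))
    exact ⟨a, by simpa [Algebra.smul_def] using congrArg Subtype.val ha⟩
  · rw [hx0 i (not_le.mp hi), mul_zero]
    exact IsLocalization.isInteger_zero

end AtPrime

section AffineMinimal

variable {R K : Type*} [CommRing R] [IsDedekindDomain R] [Field K] [Algebra R K]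
  [IsFractionRing R K]

lemma exists_notMem_mul_mem_affResIdeal (d : ℕ) (f g : ℕ → K) {l : K}
    {A : Matrix (Fin 2) (Fin 2) K} (hl : l ≠ 0) (hA : A.det ≠ 0)
    (hF : ∀ i, ∃ a : R, algebraMap R K a = l * FA d f g A i)
    (hG : ∀ i, ∃ b : R, algebraMap R K b = l * GA d f g A i) {r : R}
    (hr : algebraMap R K r = sylRes d d (fun i => l * FA d f g A i) (fun i => l * GA d f g A i))
    (p : Ideal R) [p.IsPrime] : ∃ s ∉ p, s * r ∈ AffResIdeal R d f g := by
  set O := subalgebraAtPrime K p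
  obtain ⟨B, hBO, hBdet, hBres, hAB⟩ := exists_preservesSylRes_mul_apply_one_zero_eq_zero
    O.toSubring (mem_or_inv_mem_subalgebraAtPrime p) hA
  have hFO : ∀ i, l * FA d f g (A * B) i ∈ O := fun i => by
    rw [congrFun (const_mul_FA_mul d l f g A B) i]
    exact FA_mem_of_mem (O := O.toSubring) (fun i => (hF i).choose_spec ▸ O.algebraMap_mem _)
      (fun i => (hG i).choose_spec ▸ O.algebraMap_mem _) hBO i
  have hGO : ∀ i, l * GA d f g (A * B) i ∈ O := fun i => by
    rw [congrFun (const_mul_GA_mul d l f g A B) i]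
    exact GA_mem_of_mem (O := O.toSubring) (fun i => (hF i).choose_spec ▸ O.algebraMap_mem _)
      (fun i => (hG i).choose_spec ▸ O.algebraMap_mem _) hBO i
  obtain ⟨s₁, hs₁, h₁⟩ := exists_notMem_forall_isInteger_mul p hFO
    fun i hi => by rw [FA_eq_zero_of_lt d f g _ hi, mul_zero]
  obtain ⟨s₂, hs₂, h₂⟩ := exists_notMem_forall_isInteger_mul p hGO
    fun i hi => by rw [GA_eq_zero_of_lt d f g _ hi, mul_zero]
  set s := s₁ * s₂
  have hs : s ∉ p := fun h => (Ideal.IsPrime.mem_or_mem ‹_› h).elim hs₁ hs₂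
  have hs0 : algebraMap R K s ≠ 0 := by
    rw [ne_eq, IsFractionRing.to_map_eq_zero_iff]
    exact fun h => hs (h ▸ p.zero_mem)
  refine ⟨s ^ (d + d), fun h => hs (Ideal.IsPrime.mem_of_pow_mem ‹_› _ h), Ideal.subset_span
    ⟨algebraMap R K s * l, A * B, mul_ne_zero hs0 hl, by simpa [Matrix.det_mul] using ⟨hA, hBdet⟩,
      hAB, fun i => ?_, fun i => ?_, ?_⟩⟩
  · obtain ⟨a, ha⟩ := IsLocalization.isInteger_smul (a := s₂) (h₁ i)
    exact ⟨a, by rw [ha, Algebra.smul_def, map_mul]; ring⟩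
  · obtain ⟨a, ha⟩ := IsLocalization.isInteger_smul (a := s₁) (h₂ i)
    exact ⟨a, by rw [ha, Algebra.smul_def, map_mul]; ring⟩
  · simp only [mul_assoc]
    rw [sylRes_const_mul, const_mul_FA_mul, const_mul_GA_mul, hBres, ← hr, map_mul, map_pow]

theorem resIdeal_eq_affResIdeal (d : ℕ) (f g : ℕ → K) :
    ResIdeal R d f g = AffResIdeal R d f g := by
  refine le_antisymm (Ideal.span_le.mpr ?_) (Ideal.span_mono ?_)
  · rintro r ⟨l, A, hl, hA, hF, hG, hr⟩
    exact Ideal.mem_of_forall_isMaximal_exists_mul_mem fun p hp =>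
      exists_notMem_mul_mem_affResIdeal d f g hl hA hF hG hr p
  · rintro r ⟨l, A, hl, hA, -, hF, hG, hr⟩
    exact ⟨l, A, hl, hA, hF, hG, hr⟩

end AffineMinimal

theorem statement3_general {R K : Type*} [CommRing R] [IsDedekindDomain R]
    [Field K] [Algebra R K] [IsFractionRing R K]
    (d : ℕ) (f g : ℕ → K) :
    ResIdeal R d f g = AffResIdeal R d f g ∧
    (∀ (l : K) (A : Matrix (Fin 2) (Fin 2) K), l ≠ 0 → A.det ≠ 0 →
      (∀ i, ∃ a : R, algebraMap R K a = l * FA d f g A i) →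
      (∀ i, ∃ b : R, algebraMap R K b = l * GA d f g A i) →
      ∀ r : R,
        algebraMap R K r =
          sylRes d d (fun i => l * FA d f g A i) (fun i => l * GA d f g A i) →
        (ResIdeal R d f g = Ideal.span {r} ↔ AffResIdeal R d f g = Ideal.span {r})) := by
  exact ⟨resIdeal_eq_affResIdeal d f g, fun _ _ _ _ _ _ _ _ => by rw [resIdeal_eq_affResIdeal]⟩

/-- Over a Dedekind domain `R` with fraction field `K`, for a rational map of
degree `d ≥ 2` given by a model `[F,G]`, one has `Res_R([φ]) = Res_R([φ]₁)` as ideals of `R`;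
in particular a model over `R` of the class is `R`-affine minimal iff it is `R`-minimal. -/
theorem statement3 {R K : Type*} [CommRing R] [IsDomain R] [IsDedekindDomain R]
    [Field K] [Algebra R K] [IsFractionRing R K]
    (d : ℕ) (hd : 2 ≤ d) (f g : ℕ → K)
    (hf : ∀ i, d < i → f i = 0) (hg : ∀ i, d < i → g i = 0)
    (hres : sylRes d d f g ≠ 0) :
    ResIdeal R d f g = AffResIdeal R d f g ∧
    (∀ (l : K) (A : Matrix (Fin 2) (Fin 2) K), l ≠ 0 → A.det ≠ 0 →
      (∀ i, ∃ a : R, algebraMap R K a = l * FA d f g A i) →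
      (∀ i, ∃ b : R, algebraMap R K b = l * GA d f g A i) →
      ∀ r : R,
        algebraMap R K r =
          sylRes d d (fun i => l * FA d f g A i) (fun i => l * GA d f g A i) →
        (ResIdeal R d f g = Ideal.span {r} ↔ AffResIdeal R d f g = Ideal.span {r})) :=
  statement3_general d f g

end
end

section
/- Let R be a discrete valuation ring with fraction field K, uniformizer π, and valuation v, and let [F,G] be a model over R of degree d ≥ 2 with coefficients f_d,…,f_0 and g_d,…,g_0. Write f(z) = F(z,1), g(z) = G(z,1) and let d_G = deg(g). Suppose e₂ ∈ ℤ and β ∈ K are such that, setting f'_j = π^{j e₂} Σ_{i=j}^d binom(i,j)(f_i β^{i−j} − g_i β^{i−j+1}) and g'_j = π^{(j+1) e₂} Σ_{i=j}^d binom(i,j) g_i β^{i−j}, one has v(f'_j) > ((d+1)/2)·e₂ and v(g'_j) > ((d+1)/2)·e₂ for all j = 0,…,d. Then: if d_G > (d+1)/2 then e₂ > −(2/(2d_G − d + 1))·v(g_{d_G}), and if d_G < d then e₂ > −(2/(d−1))·v(f_d). -/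
/-! The sums defining `g'_{d_G}` and `f'_d` collapse to their top terms, because `g` vanishes
beyond `d_G` (and in particular `g_d = 0` when `d_G < d`). Hence
`v(g'_{d_G}) = (d_G + 1) e₂ + v(g_{d_G})` and `v(f'_d) = d e₂ + v(f_d)`, and the hypothesis
`v > (d + 1) e₂ / 2` on these two coefficients is linear in `e₂`; solving it gives both bounds. -/

noncomputable section

theorem AddValuation.map_zpow_of_eq_one {K : Type*} [Field K] (v : AddValuation K (WithTop ℤ))
    {x : K} (hx : v x = 1) (n : ℤ) : v (x ^ n) = n := by
  cases n with
  | ofNat k =>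
    rw [Int.ofNat_eq_natCast, zpow_natCast, v.map_pow, hx]
    norm_cast; simp
  | negSucc k =>
    rw [zpow_negSucc, v.map_inv, v.map_pow, hx]
    norm_cast
    simp [Int.negSucc_eq]

theorem Finset.sum_Icc_eq_left {M : Type*} [AddCommMonoid M] {j d : ℕ} (c : ℕ → M)
    (hjd : j ≤ d) (hc : ∀ i, j < i → c i = 0) : ∑ i ∈ Finset.Icc j d, c i = c j :=
  Finset.sum_eq_single_of_mem j (Finset.mem_Icc.2 ⟨le_rfl, hjd⟩) fun i hi hij =>
    hc i (lt_of_le_of_ne (Finset.mem_Icc.1 hi).1 (Ne.symm hij))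

theorem AddValuation.lt_of_lt_map_zpow_mul {K : Type*} [Field K] (v : AddValuation K (WithTop ℤ))
    {ϖ c : K} (hϖ : v ϖ = 1) {k m : ℤ} (hc : v c = m) {q : ℚ}
    (h : (q : WithTop ℚ) < (v (ϖ ^ k * c)).map (fun z : ℤ => (z : ℚ))) : q < k + m := by
  rw [v.map_mul, v.map_zpow_of_eq_one hϖ, hc, ← WithTop.coe_add, WithTop.map_coe] at h
  exact_mod_cast WithTop.coe_lt_coe.1 h

theorem neg_two_div_mul_lt_of_half_mul_lt {a d e m : ℚ} (ha : d + 1 < 2 * a)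
    (h : (d + 1) / 2 * e < a * e + m) : -(2 / (2 * a - (d + 1))) * m < e := by
  rw [show -(2 / (2 * a - (d + 1))) * m = -(2 * m) / (2 * a - (d + 1)) by ring,
    div_lt_iff₀ (sub_pos.2 ha)]
  linarith

theorem statement8_general {R K : Type*} [CommRing R]
    [Field K] [Algebra R K]
    (v : AddValuation K (WithTop ℤ))
    (π : R) (hπ1 : v (algebraMap R K π) = 1)
    (d : ℕ) (hd : 2 ≤ d) (f g : ℕ → K)
    (hg : ∀ i, d < i → g i = 0)
    (dG : ℕ) (hdG : g dG ≠ 0) (hdG' : ∀ i, dG < i → g i = 0)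
    (e₂ : ℤ) (β : K) (f' g' : ℕ → K)
    (hf' : ∀ j, f' j = (algebraMap R K π) ^ ((j : ℤ) * e₂) *
      ∑ i ∈ Finset.Icc j d, (Nat.choose i j : K) * (f i * β ^ (i - j) - g i * β ^ (i - j + 1)))
    (hg' : ∀ j, g' j = (algebraMap R K π) ^ (((j : ℤ) + 1) * e₂) *
      ∑ i ∈ Finset.Icc j d, (Nat.choose i j : K) * (g i * β ^ (i - j)))
    (hineq : ∀ j ≤ d,
      ((((d : ℚ) + 1) / 2 * (e₂ : ℚ) : ℚ) : WithTop ℚ) <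
          (v (f' j)).map (fun z : ℤ => (z : ℚ)) ∧
      ((((d : ℚ) + 1) / 2 * (e₂ : ℚ) : ℚ) : WithTop ℚ) <
          (v (g' j)).map (fun z : ℤ => (z : ℚ))) :
    ((((d : ℚ) + 1) / 2 < (dG : ℚ)) → ∀ m : ℤ, v (g dG) = (m : WithTop ℤ) →
        -(2 / (2 * (dG : ℚ) - (d : ℚ) + 1)) * (m : ℚ) < (e₂ : ℚ)) ∧
    (dG < d → ∀ m : ℤ, v (f d) = (m : WithTop ℤ) →
        -(2 / ((d : ℚ) - 1)) * (m : ℚ) < (e₂ : ℚ)) := by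
  have hdG_le : dG ≤ d := not_lt.1 fun h => hdG (hg dG h)
  refine ⟨fun hdG_gt m hm => ?_, fun hdG_lt m hm => ?_⟩
  · have hg'dG : g' dG = algebraMap R K π ^ (((dG : ℤ) + 1) * e₂) * g dG := by
      rw [hg', Finset.sum_Icc_eq_left _ hdG_le fun i hi => by simp [hdG' i hi]]
      simp
    have hlt := v.lt_of_lt_map_zpow_mul hπ1 hm (hg'dG ▸ (hineq dG hdG_le).2)
    have := neg_two_div_mul_lt_of_half_mul_lt (a := dG + 1) (d := d) (e := e₂) (m := m)
      (by linarith) (by push_cast at hlt; linarith)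
    convert this using 4; ring
  · have hf'd : f' d = algebraMap R K π ^ ((d : ℤ) * e₂) * f d := by
      rw [hf', Finset.Icc_self, Finset.sum_singleton, hdG' d hdG_lt]
      simp
    have hlt := v.lt_of_lt_map_zpow_mul hπ1 hm (hf'd ▸ (hineq d le_rfl).1)
    have hd' : (2 : ℚ) ≤ d := by exact_mod_cast hd
    have := neg_two_div_mul_lt_of_half_mul_lt (a := d) (d := d) (e := e₂) (m := m)
      (by linarith) (by push_cast at hlt; linarith)
    convert this using 4; ring

/-- (Lower bounds for `e₂`, Lemma on bounds.) With `[F,G]` a model over the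
DVR `R`, `d_G = deg g`, and `e₂ ∈ ℤ`, `β ∈ K` satisfying the valuation inequalities
`v(f'_j) > ((d+1)/2)e₂` and `v(g'_j) > ((d+1)/2)e₂` for all `j ≤ d`, one has
`e₂ > −(2/(2d_G − d + 1))·v(g_{d_G})` if `d_G > (d+1)/2`, and `e₂ > −(2/(d−1))·v(f_d)`
if `d_G < d`. -/
theorem statement8 {R K : Type*} [CommRing R] [IsDomain R] [IsDiscreteValuationRing R]
    [Field K] [Algebra R K] [IsFractionRing R K]
    (v : AddValuation K (WithTop ℤ))
    (hv : ∀ x : K, 0 ≤ v x ↔ ∃ r : R, algebraMap R K r = x)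
    (hvtop : ∀ x : K, v x = ⊤ ↔ x = 0)
    (π : R) (hπ : Irreducible π) (hπ1 : v (algebraMap R K π) = 1)
    (d : ℕ) (hd : 2 ≤ d) (f g : ℕ → K)
    (hf : ∀ i, d < i → f i = 0) (hg : ∀ i, d < i → g i = 0)
    (hfR : ∀ i, ∃ a : R, algebraMap R K a = f i)
    (hgR : ∀ i, ∃ b : R, algebraMap R K b = g i)
    (hres : sylRes d d f g ≠ 0)
    (dG : ℕ) (hdG : g dG ≠ 0) (hdG' : ∀ i, dG < i → g i = 0)
    (e₂ : ℤ) (β : K) (f' g' : ℕ → K)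
    (hf' : ∀ j, f' j = (algebraMap R K π) ^ ((j : ℤ) * e₂) *
      ∑ i ∈ Finset.Icc j d, (Nat.choose i j : K) * (f i * β ^ (i - j) - g i * β ^ (i - j + 1)))
    (hg' : ∀ j, g' j = (algebraMap R K π) ^ (((j : ℤ) + 1) * e₂) *
      ∑ i ∈ Finset.Icc j d, (Nat.choose i j : K) * (g i * β ^ (i - j)))
    (hineq : ∀ j ≤ d,
      ((((d : ℚ) + 1) / 2 * (e₂ : ℚ) : ℚ) : WithTop ℚ) <
          (v (f' j)).map (fun z : ℤ => (z : ℚ)) ∧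
      ((((d : ℚ) + 1) / 2 * (e₂ : ℚ) : ℚ) : WithTop ℚ) <
          (v (g' j)).map (fun z : ℤ => (z : ℚ))) :
    ((((d : ℚ) + 1) / 2 < (dG : ℚ)) → ∀ m : ℤ, v (g dG) = (m : WithTop ℤ) →
        -(2 / (2 * (dG : ℚ) - (d : ℚ) + 1)) * (m : ℚ) < (e₂ : ℚ)) ∧
    (dG < d → ∀ m : ℤ, v (f d) = (m : WithTop ℤ) →
        -(2 / ((d : ℚ) - 1)) * (m : ℚ) < (e₂ : ℚ)) :=
  statement8_general v π hπ1 d hd f g hg dG hdG hdG' e₂ β f' g' hf' hg' hineq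

end
end
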